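/- Suppose potential outcomes depend only on the K'-neighborhood treatment subvector for some K' ≤ K (i.e., Y_i(d) = Y_i(d') whenever d_{N(i,K')} = d'_{N(i,K')}). Then under unconfoundedness and the exposure-mapping pinning condition, τ(t,t') = τ*(t,t'), and hence τ(t,t') satisfies K-neighborhood sign preservation. -/

import Mathlib

open Finset
open scoped Classical

noncomputable section

/-- Probability of event `A` under mass function `p` on a finite space. -/
def prb {Ω : Type*} [Fintype Ω] (p : Ω → ℝ) (A : Ω → Prop) : ℝ :=
  ∑ ω, if A ω then p ω else 0

/-- Unnormalized expectation of `f` on the event `A`. -/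
def eiv {Ω : Type*} [Fintype Ω] (p : Ω → ℝ) (f : Ω → ℝ) (A : Ω → Prop) : ℝ :=
  ∑ ω, if A ω then p ω * f ω else 0

/-- Expectation of `f`. -/
def expv {Ω : Type*} [Fintype Ω] (p : Ω → ℝ) (f : Ω → ℝ) : ℝ := ∑ ω, p ω * f ω

/-- Conditional expectation of `f` given the event `A`. -/
def cexp {Ω : Type*} [Fintype Ω] (p : Ω → ℝ) (f : Ω → ℝ) (A : Ω → Prop) : ℝ :=
  eiv p f A / prb p A

/-- Conditional probability of `A` given `B`. -/
def cpr {Ω : Type*} [Fintype Ω] (p : Ω → ℝ) (A B : Ω → Prop) : ℝ :=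
  prb p (fun ω => A ω ∧ B ω) / prb p B

/-- Real value of a boolean treatment. -/
def bR : Bool → ℝ := fun x => if x then 1 else 0

section Framework

variable {Ω : Type*} [Fintype Ω] {n : ℕ} {E : Type*}

/-- The assignment vector equal to `δ i` on the `K`-neighborhood `N i` and to `d` outside it:
`(δᵢ, d₋N(i,K))`. -/
def pin (N : Fin n → Finset (Fin n)) (δ : Fin n → Fin n → Bool) (i : Fin n)
    (d : Fin n → Bool) : Fin n → Bool :=
  fun j => if j ∈ N i then δ i j else d j

/-- The exposure-mapping estimand
`τ(t,t') = (1/mₙ) Σ_{i∈ℳₙ} (E[Yᵢ | Tᵢ = t, 𝒞ᵢ] − E[Yᵢ | Tᵢ = t', 𝒞ᵢ])`,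
where `Tᵢ = f(i, D)` and the event `C i` is the conditioning value of the controls `𝒞ᵢ`. -/
def tauE (p : Ω → ℝ) (Y : Fin n → (Fin n → Bool) → Ω → ℝ) (D : Ω → Fin n → Bool)
    (C : Fin n → Ω → Prop) (f : Fin n → (Fin n → Bool) → E) (M : Finset (Fin n))
    (t t' : E) : ℝ :=
  (M.card : ℝ)⁻¹ * ∑ i ∈ M,
    (cexp p (fun ω => Y i (D ω) ω) (fun ω => f i (D ω) = t ∧ C i ω) -
     cexp p (fun ω => Y i (D ω) ω) (fun ω => f i (D ω) = t' ∧ C i ω))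

/-- `τ*(t,t') = (1/mₙ) Σ_{i∈ℳₙ} Σ_d E[Yᵢ(d) − Yᵢ(δᵢ, d₋N(i,K)) | 𝒞ᵢ] · P(D = d | Tᵢ = t, 𝒞ᵢ)`. -/
def tauStarE (p : Ω → ℝ) (Y : Fin n → (Fin n → Bool) → Ω → ℝ) (D : Ω → Fin n → Bool)
    (C : Fin n → Ω → Prop) (f : Fin n → (Fin n → Bool) → E) (M : Finset (Fin n))
    (N : Fin n → Finset (Fin n)) (δ : Fin n → Fin n → Bool) (t : E) : ℝ :=
  (M.card : ℝ)⁻¹ * ∑ i ∈ M, ∑ d : Fin n → Bool,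
    cexp p (fun ω => Y i d ω - Y i (pin N δ i d) ω) (C i) *
      cpr p (fun ω => D ω = d) (fun ω => f i (D ω) = t ∧ C i ω)

/-- The bias term
`ℛₙ = (1/mₙ) Σ_{i∈ℳₙ} Σ_d E[Yᵢ(δᵢ, d₋N(i,K)) | 𝒞ᵢ] (P(D=d | Tᵢ=t, 𝒞ᵢ) − P(D=d | Tᵢ=t', 𝒞ᵢ))`. -/
def RnE (p : Ω → ℝ) (Y : Fin n → (Fin n → Bool) → Ω → ℝ) (D : Ω → Fin n → Bool)
    (C : Fin n → Ω → Prop) (f : Fin n → (Fin n → Bool) → E) (M : Finset (Fin n))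
    (N : Fin n → Finset (Fin n)) (δ : Fin n → Fin n → Bool) (t t' : E) : ℝ :=
  (M.card : ℝ)⁻¹ * ∑ i ∈ M, ∑ d : Fin n → Bool,
    cexp p (fun ω => Y i (pin N δ i d) ω) (C i) *
      (cpr p (fun ω => D ω = d) (fun ω => f i (D ω) = t ∧ C i ω) -
       cpr p (fun ω => D ω = d) (fun ω => f i (D ω) = t' ∧ C i ω))

end Framework

section FiniteProbability

variable {Ω α : Type*} [Fintype Ω] (p : Ω → ℝ)

lemma prb_eq_eiv_one (A : Ω → Prop) : prb p A = eiv p (fun _ => 1) A := by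
  simp only [prb, eiv, mul_one]

lemma eiv_congr {g h : Ω → ℝ} {A B : Ω → Prop} (hAB : ∀ ω, A ω ↔ B ω)
    (hgh : ∀ ω, B ω → g ω = h ω) : eiv p g A = eiv p h B := by
  refine Finset.sum_congr rfl fun ω _ => ?_
  by_cases hB : B ω <;> simp [hB, hAB ω, hgh ω]

lemma cexp_congr {g h : Ω → ℝ} {A : Ω → Prop} (hgh : ∀ ω, A ω → g ω = h ω) :
    cexp p g A = cexp p h A := by
  rw [cexp, cexp, eiv_congr p (fun _ => Iff.rfl) hgh]

lemma cexp_sub (g h : Ω → ℝ) (A : Ω → Prop) :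
    cexp p (fun ω => g ω - h ω) A = cexp p g A - cexp p h A := by
  simp only [cexp, eiv, ← sub_div, ← Finset.sum_sub_distrib]
  congr 1
  refine Finset.sum_congr rfl fun ω _ => ?_
  split_ifs <;> ring

lemma cexp_neg (g : Ω → ℝ) (A : Ω → Prop) :
    cexp p (fun ω => -g ω) A = -cexp p g A := by
  simp only [cexp, eiv, ← neg_div, ← Finset.sum_neg_distrib]
  congr 1
  refine Finset.sum_congr rfl fun ω _ => ?_
  split_ifs <;> ring

lemma prb_nonneg (hp : ∀ ω, 0 ≤ p ω) (A : Ω → Prop) : 0 ≤ prb p A :=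
  Finset.sum_nonneg fun ω _ => by split_ifs <;> simp [hp ω]

lemma cpr_nonneg (hp : ∀ ω, 0 ≤ p ω) (A B : Ω → Prop) : 0 ≤ cpr p A B :=
  div_nonneg (prb_nonneg p hp _) (prb_nonneg p hp _)

lemma cexp_nonneg (hp : ∀ ω, 0 ≤ p ω) {g : Ω → ℝ} {A : Ω → Prop}
    (hg : ∀ ω, A ω → 0 ≤ g ω) : 0 ≤ cexp p g A := by
  refine div_nonneg (Finset.sum_nonneg fun ω _ => ?_) (prb_nonneg p hp A)
  split_ifs with hA
  exacts [mul_nonneg (hp ω) (hg ω hA), le_rfl]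

lemma exists_of_prb_pos {A : Ω → Prop} (h : 0 < prb p A) : ∃ ω, A ω := by
  obtain ⟨ω, -, hω⟩ := Finset.exists_ne_zero_of_sum_ne_zero h.ne'
  exact ⟨ω, by_contra fun hA => hω (if_neg hA)⟩

lemma eiv_eq_sum_eiv_eq [Fintype α] (g : Ω → ℝ) (D : Ω → α) (A : Ω → Prop) :
    eiv p g A = ∑ a, eiv p g (fun ω => D ω = a ∧ A ω) := by
  unfold eiv
  rw [Finset.sum_comm]
  refine Finset.sum_congr rfl fun ω _ => ?_
  rw [Finset.sum_eq_single (D ω)]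
  · simp
  · exact fun a _ ha => if_neg fun h => ha h.1.symm
  · simp

lemma prb_eq_sum_prb_eq [Fintype α] (D : Ω → α) (A : Ω → Prop) :
    prb p A = ∑ a, prb p (fun ω => D ω = a ∧ A ω) := by
  simp only [prb_eq_eiv_one]
  exact eiv_eq_sum_eiv_eq p _ D A

lemma eiv_eq_and_comp (Z : α → Ω → ℝ) (D : Ω → α) (S : α → Prop) (C : Ω → Prop) (a : α) :
    eiv p (fun ω => Z (D ω) ω) (fun ω => D ω = a ∧ S (D ω) ∧ C ω) =
      if S a then eiv p (Z a) (fun ω => D ω = a ∧ C ω) else 0 := by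
  split_ifs with hS
  · refine eiv_congr p (fun ω => ?_) fun ω h => by rw [h.1]
    exact ⟨fun h => ⟨h.1, h.2.2⟩, fun h => ⟨h.1, h.1 ▸ hS, h.2⟩⟩
  · refine Finset.sum_eq_zero fun ω _ => if_neg ?_
    rintro ⟨rfl, hSa, -⟩
    exact hS hSa

lemma prb_eq_and_comp (D : Ω → α) (S : α → Prop) (C : Ω → Prop) (a : α) :
    prb p (fun ω => D ω = a ∧ S (D ω) ∧ C ω) =
      if S a then prb p (fun ω => D ω = a ∧ C ω) else 0 := by
  simp only [prb_eq_eiv_one]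
  exact eiv_eq_and_comp p (fun _ _ => 1) D S C a

lemma cpr_eq_zero_of_not (D : Ω → α) {S : α → Prop} (C : Ω → Prop) {a : α} (ha : ¬ S a) :
    cpr p (fun ω => D ω = a) (fun ω => S (D ω) ∧ C ω) = 0 := by
  rw [cpr, prb_eq_and_comp p D S C a, if_neg ha, zero_div]

lemma sum_cpr_eq_one [Fintype α] (D : Ω → α) {B : Ω → Prop} (hB : prb p B ≠ 0) :
    ∑ a, cpr p (fun ω => D ω = a) B = 1 := by
  simp only [cpr]
  rw [← Finset.sum_div, ← prb_eq_sum_prb_eq p D B, div_self hB]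

/- The adjustment formula; `hunc` says that each `Z a` is mean-independent of `D` given `C`. -/
theorem cexp_comp_eq_sum_cexp_mul_cpr [Fintype α] (Z : α → Ω → ℝ) (D : Ω → α) (S : α → Prop)
    (C : Ω → Prop) (hC : prb p C ≠ 0)
    (hunc : ∀ a, eiv p (Z a) (fun ω => D ω = a ∧ C ω) * prb p C =
      eiv p (Z a) C * prb p (fun ω => D ω = a ∧ C ω)) :
    cexp p (fun ω => Z (D ω) ω) (fun ω => S (D ω) ∧ C ω) =
      ∑ a, cexp p (Z a) C * cpr p (fun ω => D ω = a) (fun ω => S (D ω) ∧ C ω) := by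
  have hstratum : ∀ a, eiv p (Z a) (fun ω => D ω = a ∧ C ω) =
      cexp p (Z a) C * prb p (fun ω => D ω = a ∧ C ω) := fun a => by
    rw [cexp, div_mul_eq_mul_div, eq_div_iff hC, hunc a]
  rw [cexp, eiv_eq_sum_eiv_eq p _ D, Finset.sum_div]
  refine Finset.sum_congr rfl fun a _ => ?_
  rw [cpr, prb_eq_and_comp p D S C a, eiv_eq_and_comp p Z D S C a]
  split_ifs
  · rw [hstratum, mul_div_assoc]
  · simp

end FiniteProbability

section Exposure

variable {Ω : Type*} {n : ℕ} {E : Type*} {N : Fin n → Finset (Fin n)}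
  {δ : Fin n → Fin n → Bool} {i : Fin n}

@[simp] lemma pin_of_mem (d : Fin n → Bool) {j : Fin n} (hj : j ∈ N i) : pin N δ i d j = δ i j :=
  if_pos hj

@[simp] lemma pin_of_notMem (d : Fin n → Bool) {j : Fin n} (hj : j ∉ N i) : pin N δ i d j = d j :=
  if_neg hj

lemma outcome_eq_of_eqOn_nbhd {N' : Fin n → Finset (Fin n)} {Y : Fin n → (Fin n → Bool) → Ω → ℝ}
    (hsub : N' i ⊆ N i)
    (hlocY : ∀ d d' : Fin n → Bool, (∀ j ∈ N' i, d j = d' j) → ∀ ω, Y i d ω = Y i d' ω)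
    {d : Fin n → Bool} (hd : ∀ j ∈ N i, d j = δ i j) (ω : Ω) : Y i d ω = Y i (δ i) ω :=
  hlocY d (δ i) (fun j hj => hd j (hsub hj)) ω

lemma exposure_pin_eq {f : Fin n → (Fin n → Bool) → E} {t' : E}
    (hf : ∀ d d' : Fin n → Bool, (∀ j ∈ N i, d j = d' j) → f i d = f i d')
    (hpin : ∀ d : Fin n → Bool, f i d = t' → ∀ j ∈ N i, d j = δ i j)
    {d₀ : Fin n → Bool} (hd₀ : f i d₀ = t') (d : Fin n → Bool) : f i (pin N δ i d) = t' :=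
  hd₀ ▸ hf _ _ fun j hj => by rw [pin_of_mem d hj, hpin d₀ hd₀ j hj]


variable [Fintype Ω] (p : Ω → ℝ) (Y : Fin n → (Fin n → Bool) → Ω → ℝ) (D : Ω → Fin n → Bool)
  (C : Fin n → Ω → Prop) (f : Fin n → (Fin n → Bool) → E)

/- On `{Tᵢ = t'}` the pinning condition and local interference give `Yᵢ(D) = Yᵢ(δᵢ)`, and the
adjustment formula turns both conditional means into averages of `E[Yᵢ(d) | 𝒞ᵢ]`. -/
theorem cexp_sub_cexp_eq_sum {N' : Fin n → Finset (Fin n)} {t t' : E}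
    (hsub : N' i ⊆ N i)
    (hlocY : ∀ d d' : Fin n → Bool, (∀ j ∈ N' i, d j = d' j) → ∀ ω, Y i d ω = Y i d' ω)
    (hpin : ∀ d : Fin n → Bool, f i d = t' → ∀ j ∈ N i, d j = δ i j)
    (hunc : ∀ d a : Fin n → Bool, eiv p (Y i d) (fun ω => D ω = a ∧ C i ω) * prb p (C i) =
      eiv p (Y i d) (C i) * prb p (fun ω => D ω = a ∧ C i ω))
    (hC : prb p (C i) ≠ 0) (hT : prb p (fun ω => f i (D ω) = t ∧ C i ω) ≠ 0)
    (hT' : prb p (fun ω => f i (D ω) = t' ∧ C i ω) ≠ 0) :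
    cexp p (fun ω => Y i (D ω) ω) (fun ω => f i (D ω) = t ∧ C i ω) -
        cexp p (fun ω => Y i (D ω) ω) (fun ω => f i (D ω) = t' ∧ C i ω) =
      ∑ d : Fin n → Bool, cexp p (fun ω => Y i d ω - Y i (pin N δ i d) ω) (C i) *
        cpr p (fun ω => D ω = d) (fun ω => f i (D ω) = t ∧ C i ω) := by
  have hpinned : cexp p (fun ω => Y i (D ω) ω) (fun ω => f i (D ω) = t' ∧ C i ω) =
      cexp p (Y i (δ i)) (C i) := calc
    _ = cexp p (fun ω => Y i (δ i) ω) (fun ω => f i (D ω) = t' ∧ C i ω) :=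
      cexp_congr p fun ω h => outcome_eq_of_eqOn_nbhd hsub hlocY (hpin _ h.1) ω
    _ = ∑ d, cexp p (Y i (δ i)) (C i) *
          cpr p (fun ω => D ω = d) (fun ω => f i (D ω) = t' ∧ C i ω) :=
      cexp_comp_eq_sum_cexp_mul_cpr p (fun _ => Y i (δ i)) D (fun d => f i d = t') (C i) hC
        fun a => hunc (δ i) a
    _ = cexp p (Y i (δ i)) (C i) := by rw [← Finset.mul_sum, sum_cpr_eq_one p D hT', mul_one]
  rw [hpinned, cexp_comp_eq_sum_cexp_mul_cpr p (Y i) D (fun d => f i d = t) (C i) hC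
    fun a => hunc a a]
  simp only [cexp_sub, outcome_eq_of_eqOn_nbhd hsub hlocY (fun j hj => pin_of_mem _ hj),
    sub_mul, Finset.sum_sub_distrib, ← Finset.mul_sum, sum_cpr_eq_one p D hT, mul_one]

theorem tauE_eq_tauStarE {N' : Fin n → Finset (Fin n)} (M : Finset (Fin n)) (t t' : E)
    (hsub : ∀ i, N' i ⊆ N i)
    (hlocY : ∀ i (d d' : Fin n → Bool), (∀ j ∈ N' i, d j = d' j) → ∀ ω, Y i d ω = Y i d' ω)
    (hpin : ∀ i (d : Fin n → Bool), f i d = t' → ∀ j ∈ N i, d j = δ i j)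
    (hunc : ∀ i (d a : Fin n → Bool), eiv p (Y i d) (fun ω => D ω = a ∧ C i ω) * prb p (C i) =
      eiv p (Y i d) (C i) * prb p (fun ω => D ω = a ∧ C i ω))
    (hC : ∀ i ∈ M, prb p (C i) ≠ 0) (hT : ∀ i ∈ M, prb p (fun ω => f i (D ω) = t ∧ C i ω) ≠ 0)
    (hT' : ∀ i ∈ M, prb p (fun ω => f i (D ω) = t' ∧ C i ω) ≠ 0) :
    tauE p Y D C f M t t' = tauStarE p Y D C f M N δ t :=
  congrArg _ <| Finset.sum_congr rfl fun i hi =>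
    cexp_sub_cexp_eq_sum p Y D C f (hsub i) (hlocY i) (hpin i) (hunc i) (hC i hi) (hT i hi)
      (hT' i hi)

theorem tauStarE_nonneg (hp : ∀ ω, 0 ≤ p ω) (M : Finset (Fin n)) (t : E)
    (hmono : ∀ i ∈ M, ∀ d, f i d = t → ∀ ω, Y i (pin N δ i d) ω ≤ Y i d ω) :
    0 ≤ tauStarE p Y D C f M N δ t := by
  refine mul_nonneg (by positivity) (Finset.sum_nonneg fun i hi => Finset.sum_nonneg fun d _ => ?_)
  by_cases hd : f i d = t
  · exact mul_nonneg (cexp_nonneg p hp fun ω _ => sub_nonneg.2 (hmono i hi d hd ω))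
      (cpr_nonneg p hp _ _)
  · rw [cpr_eq_zero_of_not p D (S := fun d => f i d = t) (C i) hd, mul_zero]

theorem tauStarE_neg (M : Finset (Fin n)) (t : E) :
    tauStarE p (fun i d ω => -Y i d ω) D C f M N δ t = -tauStarE p Y D C f M N δ t := by
  simp only [tauStarE, ← neg_sub', cexp_neg, neg_mul, Finset.sum_neg_distrib, mul_neg]

end Exposure

theorem stmt9_general {Ω : Type*} [Fintype Ω] {n : ℕ} {E : Type*}
    (p : Ω → ℝ) (hp : ∀ ω, 0 ≤ p ω)
    (Y : Fin n → (Fin n → Bool) → Ω → ℝ) (D : Ω → Fin n → Bool)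
    (C : Fin n → Ω → Prop) (N N' : Fin n → Finset (Fin n))
    (f : Fin n → (Fin n → Bool) → E) (M : Finset (Fin n))
    (t t' : E) (δ : Fin n → Fin n → Bool)
    (hf : ∀ (i : Fin n) (d d' : Fin n → Bool), (∀ j ∈ N i, d j = d' j) → f i d = f i d')
    (hpin : ∀ (i : Fin n) (d : Fin n → Bool), f i d = t' → ∀ j ∈ N i, d j = δ i j)
    (hunc : ∀ (i : Fin n) (d dvec : Fin n → Bool),
      eiv p (fun ω => Y i d ω) (fun ω => D ω = dvec ∧ C i ω) * prb p (C i) =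
        eiv p (fun ω => Y i d ω) (C i) * prb p (fun ω => D ω = dvec ∧ C i ω))
    (hC : ∀ i ∈ M, 0 < prb p (C i))
    (hposT : ∀ i ∈ M, 0 < prb p (fun ω => f i (D ω) = t ∧ C i ω))
    (hposT' : ∀ i ∈ M, 0 < prb p (fun ω => f i (D ω) = t' ∧ C i ω))
    -- local interference: the `K'`-neighborhoods are contained in the `K`-neighborhoods
    (hsub : ∀ i, N' i ⊆ N i)
    -- and potential outcomes depend only on the `K'`-neighborhood treatment subvector
    (hlocY : ∀ (i : Fin n) (d d' : Fin n → Bool), (∀ j ∈ N' i, d j = d' j) →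
      ∀ ω, Y i d ω = Y i d' ω) :
    tauE p Y D C f M t t' = tauStarE p Y D C f M N δ t ∧
    ((∀ i ∈ M, ∀ (d d' : Fin n → Bool), (∀ j ∉ N i, d j = d' j) →
        f i d = t → f i d' = t' → ∀ ω, Y i d' ω ≤ Y i d ω) →
      0 ≤ tauE p Y D C f M t t') ∧
    ((∀ i ∈ M, ∀ (d d' : Fin n → Bool), (∀ j ∉ N i, d j = d' j) →
        f i d = t → f i d' = t' → ∀ ω, Y i d ω ≤ Y i d' ω) →
      tauE p Y D C f M t t' ≤ 0) := by
  have htau : tauE p Y D C f M t t' = tauStarE p Y D C f M N δ t :=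
    tauE_eq_tauStarE p Y D C f M t t' hsub hlocY hpin hunc (fun i hi => (hC i hi).ne')
      (fun i hi => (hposT i hi).ne') (fun i hi => (hposT' i hi).ne')
  have hpin_exposure : ∀ i ∈ M, ∀ d, f i (pin N δ i d) = t' := fun i hi d => by
    obtain ⟨ω, hω, -⟩ := exists_of_prb_pos p (hposT' i hi)
    exact exposure_pin_eq (hf i) (hpin i) hω d
  have hpin_agrees_off_nbhd : ∀ i d, ∀ j ∉ N i, d j = pin N δ i d j := fun i d j hj =>
    (pin_of_notMem d hj).symm
  refine ⟨htau, fun hsign => htau ▸ ?_, fun hsign => htau ▸ ?_⟩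
  · exact tauStarE_nonneg p Y D C f hp M t fun i hi d hd =>
      hsign i hi d _ (hpin_agrees_off_nbhd i d) hd (hpin_exposure i hi d)
  · rw [← neg_nonneg, ← tauStarE_neg]
    exact tauStarE_nonneg p _ D C f hp M t fun i hi d hd ω => neg_le_neg <|
      hsign i hi d _ (hpin_agrees_off_nbhd i d) hd (hpin_exposure i hi d) ω

/-- Proposition 2: if potential outcomes depend only on the `K'`-neighborhood
treatment subvector for some `K' ≤ K` (formalized by `N' i ⊆ N i` and `Yᵢ` depending on `d`
only through `d_{N'(i)}`), then under unconfoundedness and the pinning condition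
`τ(t,t') = τ*(t,t')`, and hence `τ(t,t')` satisfies K-neighborhood sign preservation. -/
theorem stmt9 {Ω : Type*} [Fintype Ω] {n : ℕ} {E : Type*}
    (p : Ω → ℝ) (hp : ∀ ω, 0 ≤ p ω) (hp1 : ∑ ω, p ω = 1)
    (Y : Fin n → (Fin n → Bool) → Ω → ℝ) (D : Ω → Fin n → Bool)
    (C : Fin n → Ω → Prop) (N N' : Fin n → Finset (Fin n))
    (f : Fin n → (Fin n → Bool) → E) (M : Finset (Fin n))
    (t t' : E) (δ : Fin n → Fin n → Bool)
    (hf : ∀ (i : Fin n) (d d' : Fin n → Bool), (∀ j ∈ N i, d j = d' j) → f i d = f i d')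
    (hpin : ∀ (i : Fin n) (d : Fin n → Bool), f i d = t' → ∀ j ∈ N i, d j = δ i j)
    (hunc : ∀ (i : Fin n) (d dvec : Fin n → Bool),
      eiv p (fun ω => Y i d ω) (fun ω => D ω = dvec ∧ C i ω) * prb p (C i) =
        eiv p (fun ω => Y i d ω) (C i) * prb p (fun ω => D ω = dvec ∧ C i ω))
    (hC : ∀ i ∈ M, 0 < prb p (C i))
    (hposT : ∀ i ∈ M, 0 < prb p (fun ω => f i (D ω) = t ∧ C i ω))
    (hposT' : ∀ i ∈ M, 0 < prb p (fun ω => f i (D ω) = t' ∧ C i ω))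
    -- local interference: the `K'`-neighborhoods are contained in the `K`-neighborhoods
    (hsub : ∀ i, N' i ⊆ N i)
    -- and potential outcomes depend only on the `K'`-neighborhood treatment subvector
    (hlocY : ∀ (i : Fin n) (d d' : Fin n → Bool), (∀ j ∈ N' i, d j = d' j) →
      ∀ ω, Y i d ω = Y i d' ω) :
    tauE p Y D C f M t t' = tauStarE p Y D C f M N δ t ∧
    ((∀ i ∈ M, ∀ (d d' : Fin n → Bool), (∀ j ∉ N i, d j = d' j) →
        f i d = t → f i d' = t' → ∀ ω, Y i d' ω ≤ Y i d ω) →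
      0 ≤ tauE p Y D C f M t t') ∧
    ((∀ i ∈ M, ∀ (d d' : Fin n → Bool), (∀ j ∉ N i, d j = d' j) →
        f i d = t → f i d' = t' → ∀ ω, Y i d ω ≤ Y i d' ω) →
      tauE p Y D C f M t t' ≤ 0) :=
  stmt9_general p hp Y D C N N' f M t t' δ hf hpin hunc hC hposT hposT' hsub hlocY
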